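/- Let F : ℝ → ℝ be infinitely differentiable with F′(x̄) ≠ 0 for all x̄, let a₀ : ℝ → ℝ be twice continuously differentiable and a₁ : ℝ → ℝ be three times continuously differentiable. With S_F := F′′′/F′ − (3/2)(F″/F′)², define ā₁ := F′²·(a₁∘F) + 2S_F, ā₀ := F′³·(a₀∘F) + F′F″·(a₁∘F) + S_F′, μ := −2a₀ + a₁′, and μ̄ := −2ā₀ + ā₁′. For any coefficient pair (p, q) write Ψ[p,q] := (9qμ_{p,q}² + 7μ_{p,q}′² − 6μ_{p,q}μ_{p,q}″)³/(1728 μ_{p,q}⁸) where μ_{p,q} = −2p + q′. Then for every x̄ ∈ ℝ with μ(F(x̄)) ≠ 0, one has Ψ[ā₀,ā₁](x̄) = Ψ[a₀,a₁](F(x̄)). -/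

import Mathlib

/-- The Schwarzian derivative `S_F = F′′′/F′ − (3/2)(F″/F′)²`. -/
noncomputable def schwarzian (F : ℝ → ℝ) (x : ℝ) : ℝ :=
  iteratedDeriv 3 F x / deriv F x - (3 / 2) * (iteratedDeriv 2 F x / deriv F x) ^ 2

/-- The transformed coefficient `ā₁ = F′² (a₁∘F) + 2 S_F`. -/
noncomputable def abar1 (F a1 : ℝ → ℝ) (x : ℝ) : ℝ :=
  (deriv F x) ^ 2 * a1 (F x) + 2 * schwarzian F x

/-- The transformed coefficient `ā₀ = F′³ (a₀∘F) + F′F″ (a₁∘F) + S_F′`. -/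
noncomputable def abar0 (F a0 a1 : ℝ → ℝ) (x : ℝ) : ℝ :=
  (deriv F x) ^ 3 * a0 (F x) + deriv F x * iteratedDeriv 2 F x * a1 (F x)
    + deriv (schwarzian F) x

/-- The semi-invariant `μ_{p,q} = −2p + q′` of the normal form `y′′′ + q y′ + p y = 0`. -/
noncomputable def muFun (p q : ℝ → ℝ) (x : ℝ) : ℝ := -2 * p x + deriv q x

/-- The invariant `Ψ[p,q] = (9qμ² + 7μ′² − 6μμ″)³ / (1728 μ⁸)` with `μ = μ_{p,q}`. -/
noncomputable def PsiFun (p q : ℝ → ℝ) (x : ℝ) : ℝ :=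
  (9 * q x * (muFun p q x) ^ 2 + 7 * (deriv (muFun p q) x) ^ 2
      - 6 * muFun p q x * iteratedDeriv 2 (muFun p q) x) ^ 3
    / (1728 * (muFun p q x) ^ 8)

/-- `Ψ = (9a₁μ² + 7μ′² − 6μμ″)³/(1728μ⁸)` is an absolute invariant of
the normal form of the third-order linear ODE:
`Ψ[ā₀,ā₁](x̄) = Ψ[a₀,a₁](F(x̄))` whenever `μ(F(x̄)) ≠ 0`. -/
theorem stmt_10 (F : ℝ → ℝ) (hF : ContDiff ℝ (⊤ : ℕ∞) F) (hF' : ∀ x, deriv F x ≠ 0)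
    (a0 a1 : ℝ → ℝ) (ha0 : ContDiff ℝ 2 a0) (ha1 : ContDiff ℝ 3 a1) :
    ∀ x : ℝ, muFun a0 a1 (F x) ≠ 0 →
      PsiFun (abar0 F a0 a1) (abar1 F a1) x = PsiFun a0 a1 (F x) := by
  have h1top : ((⊤ : ℕ∞) : WithTop ℕ∞) ≠ 0 := by simp
  have hFs : ContDiff ℝ (⊤ : ℕ∞) F := hF.of_le (by simp)
  have hF1 : ContDiff ℝ (⊤ : ℕ∞) (deriv F) := (contDiff_infty_iff_deriv.mp hFs).2
  have hF2 : ContDiff ℝ (⊤ : ℕ∞) (deriv (deriv F)) := (contDiff_infty_iff_deriv.mp hF1).2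
  have hF3 : ContDiff ℝ (⊤ : ℕ∞) (deriv (deriv (deriv F))) :=
    (contDiff_infty_iff_deriv.mp hF2).2
  have hi2 : iteratedDeriv 2 F = deriv (deriv F) := by
    simp [iteratedDeriv_succ, iteratedDeriv_one]
  have hi3 : iteratedDeriv 3 F = deriv (deriv (deriv F)) := by
    simp [iteratedDeriv_succ, iteratedDeriv_one]
  have hdF : ∀ y, HasDerivAt F (deriv F y) y := fun y =>
    (hFs.differentiable h1top y).hasDerivAt
  have hdF1 : ∀ y, HasDerivAt (deriv F) (iteratedDeriv 2 F y) y := fun y => by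
    rw [hi2]; exact (hF1.differentiable h1top y).hasDerivAt
  have hdF2 : ∀ y, HasDerivAt (iteratedDeriv 2 F) (iteratedDeriv 3 F y) y := fun y => by
    rw [hi2, hi3]; exact (hF2.differentiable h1top y).hasDerivAt
  -- μ = muFun a0 a1 facts
  have hmC : ContDiff ℝ 2 (muFun a0 a1) := by
    have h1 : ContDiff ℝ 2 (deriv a1) := by
      have : ContDiff ℝ ((2 : ℕ) + (1 : ℕ) : ℕ) a1 := by exact_mod_cast ha1
      simpa using this.iterate_deriv' 2 1
    exact (contDiff_const.mul ha0).add h1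
  have hm1C : ContDiff ℝ 1 (deriv (muFun a0 a1)) := by
    have h2 : ContDiff ℝ (1 + 1) (muFun a0 a1) := by
      rw [one_add_one_eq_two]; exact hmC
    exact (contDiff_succ_iff_deriv.mp h2).2.2
  have hdm : ∀ y, HasDerivAt (muFun a0 a1) (deriv (muFun a0 a1) y) y := fun y =>
    (hmC.differentiable two_ne_zero y).hasDerivAt
  have him2 : iteratedDeriv 2 (muFun a0 a1) = deriv (deriv (muFun a0 a1)) := by
    simp [iteratedDeriv_succ, iteratedDeriv_one]
  have hdm1 : ∀ y, HasDerivAt (deriv (muFun a0 a1)) (iteratedDeriv 2 (muFun a0 a1) y) y :=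
    fun y => by
      rw [him2]; exact (hm1C.differentiable one_ne_zero y).hasDerivAt
  -- Schwarzian is differentiable
  have hSd : ∀ y, DifferentiableAt ℝ (schwarzian F) y := fun y => by
    have h3 : DifferentiableAt ℝ (iteratedDeriv 3 F) y := by
      rw [hi3]; exact hF3.differentiable h1top y
    have h2 : DifferentiableAt ℝ (iteratedDeriv 2 F) y := by
      rw [hi2]; exact hF2.differentiable h1top y
    have h1 : DifferentiableAt ℝ (deriv F) y := hF1.differentiable h1top y
    have : DifferentiableAt ℝ
        (fun x => iteratedDeriv 3 F x / deriv F x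
          - (3 / 2) * (iteratedDeriv 2 F x / deriv F x) ^ 2) y :=
      (h3.div h1 (hF' y)).sub ((differentiableAt_const _).mul ((h2.div h1 (hF' y)).pow 2))
    exact this
  -- Step 1: μ̄ = F′³ · (μ ∘ F)
  have key1 : ∀ y, muFun (abar0 F a0 a1) (abar1 F a1) y
      = (deriv F y) ^ 3 * muFun a0 a1 (F y) := by
    intro y
    have ha : HasDerivAt a1 (deriv a1 (F y)) (F y) :=
      (ha1.differentiable (by norm_num) (F y)).hasDerivAt
    have hcomp : HasDerivAt (fun z => a1 (F z)) (deriv a1 (F y) * deriv F y) y :=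
      ha.comp y (hdF y)
    have hp : HasDerivAt (fun z => (deriv F z) ^ 2) (2 * deriv F y * iteratedDeriv 2 F y) y := by
      have := (hdF1 y).pow 2
      norm_num at this
      refine HasDerivAt.congr_deriv this ?_; ring
    have hS2 : HasDerivAt (fun z => 2 * schwarzian F z) (2 * deriv (schwarzian F) y) y :=
      ((hSd y).hasDerivAt).const_mul 2
    have htot : HasDerivAt (abar1 F a1)
        ((2 * deriv F y * iteratedDeriv 2 F y) * a1 (F y)
          + (deriv F y) ^ 2 * (deriv a1 (F y) * deriv F y)
          + 2 * deriv (schwarzian F) y) y := by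
      have := (hp.mul hcomp).add hS2
      show HasDerivAt (fun z => (deriv F z) ^ 2 * a1 (F z) + 2 * schwarzian F z) _ y
      refine HasDerivAt.congr_deriv this ?_; ring
    simp only [muFun, abar0]
    rw [htot.deriv]
    ring
  have hmubar : muFun (abar0 F a0 a1) (abar1 F a1)
      = fun y => (deriv F y) ^ 3 * muFun a0 a1 (F y) := funext key1
  -- Step 2: first derivative of μ̄
  have key2 : ∀ y, HasDerivAt (fun z => (deriv F z) ^ 3 * muFun a0 a1 (F z))
      (3 * (deriv F y) ^ 2 * iteratedDeriv 2 F y * muFun a0 a1 (F y)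
        + (deriv F y) ^ 4 * deriv (muFun a0 a1) (F y)) y := by
    intro y
    have hcomp : HasDerivAt (fun z => muFun a0 a1 (F z))
        (deriv (muFun a0 a1) (F y) * deriv F y) y := (hdm (F y)).comp y (hdF y)
    have hp : HasDerivAt (fun z => (deriv F z) ^ 3)
        (3 * (deriv F y) ^ 2 * iteratedDeriv 2 F y) y := by
      have := (hdF1 y).pow 3
      norm_num at this
      refine HasDerivAt.congr_deriv this ?_; ring
    refine HasDerivAt.congr_deriv (hp.mul hcomp) ?_; ring
  have hderiv_mubar : deriv (muFun (abar0 F a0 a1) (abar1 F a1))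
      = fun y => 3 * (deriv F y) ^ 2 * iteratedDeriv 2 F y * muFun a0 a1 (F y)
        + (deriv F y) ^ 4 * deriv (muFun a0 a1) (F y) := by
    funext y
    rw [hmubar]
    exact (key2 y).deriv
  -- Step 3: second derivative of μ̄
  have key3 : ∀ y, iteratedDeriv 2 (muFun (abar0 F a0 a1) (abar1 F a1)) y
      = (6 * deriv F y * (iteratedDeriv 2 F y) ^ 2
          + 3 * (deriv F y) ^ 2 * iteratedDeriv 3 F y) * muFun a0 a1 (F y)
        + 7 * (deriv F y) ^ 3 * iteratedDeriv 2 F y * deriv (muFun a0 a1) (F y)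
        + (deriv F y) ^ 5 * iteratedDeriv 2 (muFun a0 a1) (F y) := by
    intro y
    have hib : iteratedDeriv 2 (muFun (abar0 F a0 a1) (abar1 F a1))
        = deriv (deriv (muFun (abar0 F a0 a1) (abar1 F a1))) := by
      simp [iteratedDeriv_succ, iteratedDeriv_one]
    rw [hib, hderiv_mubar]
    have hcomp : HasDerivAt (fun z => muFun a0 a1 (F z))
        (deriv (muFun a0 a1) (F y) * deriv F y) y := (hdm (F y)).comp y (hdF y)
    have hcomp1 : HasDerivAt (fun z => deriv (muFun a0 a1) (F z))
        (iteratedDeriv 2 (muFun a0 a1) (F y) * deriv F y) y := (hdm1 (F y)).comp y (hdF y)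
    have hp2 : HasDerivAt (fun z => (deriv F z) ^ 2)
        (2 * deriv F y * iteratedDeriv 2 F y) y := by
      have := (hdF1 y).pow 2
      norm_num at this
      refine HasDerivAt.congr_deriv this ?_; ring
    have hp4 : HasDerivAt (fun z => (deriv F z) ^ 4)
        (4 * (deriv F y) ^ 3 * iteratedDeriv 2 F y) y := by
      have := (hdF1 y).pow 4
      norm_num at this
      refine HasDerivAt.congr_deriv this ?_; ring
    have ht1 : HasDerivAt (fun z => 3 * (deriv F z) ^ 2 * iteratedDeriv 2 F z * muFun a0 a1 (F z))
        ((3 * (2 * deriv F y * iteratedDeriv 2 F y) * iteratedDeriv 2 F y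
            + 3 * (deriv F y) ^ 2 * iteratedDeriv 3 F y) * muFun a0 a1 (F y)
          + 3 * (deriv F y) ^ 2 * iteratedDeriv 2 F y
            * (deriv (muFun a0 a1) (F y) * deriv F y)) y := by
      exact (((hp2.const_mul 3).mul (hdF2 y)).mul hcomp)
    have ht2 : HasDerivAt (fun z => (deriv F z) ^ 4 * deriv (muFun a0 a1) (F z))
        (4 * (deriv F y) ^ 3 * iteratedDeriv 2 F y * deriv (muFun a0 a1) (F y)
          + (deriv F y) ^ 4 * (iteratedDeriv 2 (muFun a0 a1) (F y) * deriv F y)) y :=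
      hp4.mul hcomp1
    have htot : HasDerivAt
        (fun y => 3 * (deriv F y) ^ 2 * iteratedDeriv 2 F y * muFun a0 a1 (F y)
          + (deriv F y) ^ 4 * deriv (muFun a0 a1) (F y))
        ((6 * deriv F y * (iteratedDeriv 2 F y) ^ 2
            + 3 * (deriv F y) ^ 2 * iteratedDeriv 3 F y) * muFun a0 a1 (F y)
          + 7 * (deriv F y) ^ 3 * iteratedDeriv 2 F y * deriv (muFun a0 a1) (F y)
          + (deriv F y) ^ 5 * iteratedDeriv 2 (muFun a0 a1) (F y)) y := by
      refine HasDerivAt.congr_deriv (ht1.add ht2) ?_; ring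
    exact htot.deriv
  -- assemble
  intro x hmx
  have hf1 := hF' x
  have e0 : muFun (abar0 F a0 a1) (abar1 F a1) x
      = (deriv F x) ^ 3 * muFun a0 a1 (F x) := key1 x
  have e1 : deriv (muFun (abar0 F a0 a1) (abar1 F a1)) x
      = 3 * (deriv F x) ^ 2 * iteratedDeriv 2 F x * muFun a0 a1 (F x)
        + (deriv F x) ^ 4 * deriv (muFun a0 a1) (F x) := by rw [hderiv_mubar]
  have e2 := key3 x
  have ea : abar1 F a1 x = (deriv F x) ^ 2 * a1 (F x)
      + 2 * (iteratedDeriv 3 F x / deriv F x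
        - (3 / 2) * (iteratedDeriv 2 F x / deriv F x) ^ 2) := rfl
  unfold PsiFun
  rw [e0, e1, e2, ea]
  field_simp
  ring
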